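/- Let V be a finite-dimensional vector space over the field 𝔽₂ with two elements, equipped with a nondegenerate alternating bilinear form b (so dim V = 2g for some g), and let μ : V → 𝔽₂ be a quadratic refinement of b, i.e., μ(x + y) = μ(x) + μ(y) + b(x, y) for all x, y ∈ V. If there exists a symplectic basis e₁, …, e_g, f₁, …, f_g of V with Σᵢ μ(eᵢ)μ(fᵢ) = 0 in 𝔽₂ (i.e., the Arf invariant of μ vanishes), then there exists a symplectic basis e₁′, …, e_g′, f₁′, …, f_g′ of V such that μ(eᵢ′) = 0 for all i = 1, …, g. -/

import Mathlib

/-- `e₁, …, e_g, f₁, …, f_g` is a symplectic basis for the bilinear form `b` on the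
`𝔽₂`-vector space `V`: it is a basis of `V` with `b (eᵢ) (eⱼ) = 0`, `b (fᵢ) (fⱼ) = 0` and
`b (eᵢ) (fⱼ) = δᵢⱼ`. -/
def IsSymplecticBasis {V : Type*} [AddCommGroup V] [Module (ZMod 2) V]
    (b : V →ₗ[ZMod 2] V →ₗ[ZMod 2] ZMod 2) (g : ℕ) (e f : Fin g → V) : Prop :=
  (∀ i j, b (e i) (e j) = 0) ∧ (∀ i j, b (f i) (f j) = 0) ∧
  (∀ i j, b (e i) (f j) = if i = j then 1 else 0) ∧
  ∃ B : Module.Basis (Fin g ⊕ Fin g) (ZMod 2) V,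
    (∀ i, B (Sum.inl i) = e i) ∧ (∀ i, B (Sum.inr i) = f i)

/-!
Put `a = ∑ᵢ μ(eᵢ) fᵢ`, so that `b(eₗ, a) = μ(eₗ)` and, the `fᵢ` being pairwise orthogonal,
`μ(a) = ∑ᵢ μ(eᵢ) μ(fᵢ) = 0`. The transvection `T x = x + b(x, a) a` preserves `b`, hence maps
`{eᵢ, fᵢ}` to a symplectic basis, and `μ(T eₗ) = μ(eₗ) + b(eₗ, a) μ(a) + b(eₗ, a)² = μ(eₗ) + μ(eₗ)²`,
which vanishes on `𝔽₂`.
-/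

theorem LinearMap.IsAlt.transvection_flip_apply_apply {R M : Type*} [CommRing R]
    [AddCommGroup M] [Module R M] {B : M →ₗ[R] M →ₗ[R] R} (hB : B.IsAlt) (a x y : M) :
    B (transvection (B.flip a) a x) (transvection (B.flip a) a y) = B x y := by
  have hskew : B y a + B a y = 0 := by rw [← hB.neg a y, neg_add_cancel]
  simp only [transvection.apply, flip_apply, map_add, map_smul, add_apply, smul_apply,
    smul_eq_mul, hB.self_eq_zero a]
  linear_combination B x a * hskew

theorem IsSymplecticBasis.map_linearEquiv {V : Type*} [AddCommGroup V] [Module (ZMod 2) V]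
    {b : V →ₗ[ZMod 2] V →ₗ[ZMod 2] ZMod 2} {g : ℕ} {e f : Fin g → V}
    (h : IsSymplecticBasis b g e f) (φ : V ≃ₗ[ZMod 2] V) (hφ : ∀ x y, b (φ x) (φ y) = b x y) :
    IsSymplecticBasis b g (φ ∘ e) (φ ∘ f) := by
  obtain ⟨hee, hff, hef, B, hBe, hBf⟩ := h
  exact ⟨by simpa [hφ] using hee, by simpa [hφ] using hff, by simpa [hφ] using hef,
    B.map φ, by simp [hBe], by simp [hBf]⟩

def IsQuadraticRefinement {R M : Type*} [CommRing R] [AddCommGroup M] [Module R M]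
    (b : M →ₗ[R] M →ₗ[R] R) (μ : M → R) : Prop :=
  ∀ x y, μ (x + y) = μ x + μ y + b x y

namespace IsQuadraticRefinement

section CommRing

variable {R M : Type*} [CommRing R] [AddCommGroup M] [Module R M]
  {b : M →ₗ[R] M →ₗ[R] R} {μ : M → R}

theorem map_zero (hμ : IsQuadraticRefinement b μ) : μ 0 = 0 := by
  simpa using hμ 0 0

theorem map_sum_of_pairwise (hμ : IsQuadraticRefinement b μ) {ι : Type*} (s : Finset ι)
    (v : ι → M) (hv : Pairwise fun i j => b (v i) (v j) = 0) :
    μ (∑ i ∈ s, v i) = ∑ i ∈ s, μ (v i) := by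
  classical
  induction s using Finset.induction_on with
  | empty => simp [hμ.map_zero]
  | insert i s hi ih =>
    have horth : b (v i) (∑ j ∈ s, v j) = 0 := by
      rw [map_sum]; exact Finset.sum_eq_zero fun j hj => hv (ne_of_mem_of_not_mem hj hi).symm
    rw [Finset.sum_insert hi, Finset.sum_insert hi, hμ, ih, horth, add_zero]

end CommRing

variable {M : Type*} [AddCommGroup M] [Module (ZMod 2) M]
  {b : M →ₗ[ZMod 2] M →ₗ[ZMod 2] ZMod 2} {μ : M → ZMod 2}

theorem map_smul (hμ : IsQuadraticRefinement b μ) (c : ZMod 2) (x : M) :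
    μ (c • x) = c * μ x := by
  rcases (by decide : ∀ c : ZMod 2, c = 0 ∨ c = 1) c with rfl | rfl <;> simp [hμ.map_zero]

end IsQuadraticRefinement

theorem exists_symplectic_basis_mu_zero_general
    (V : Type*) [AddCommGroup V] [Module (ZMod 2) V]
    (b : V →ₗ[ZMod 2] V →ₗ[ZMod 2] ZMod 2)
    (halt : ∀ x, b x x = 0)
    (μ : V → ZMod 2)
    (hμ : ∀ x y, μ (x + y) = μ x + μ y + b x y)
    (g : ℕ) (e f : Fin g → V)
    (hbasis : IsSymplecticBasis b g e f)
    (harf : ∑ i, μ (e i) * μ (f i) = 0) :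
    ∃ e' f' : Fin g → V, IsSymplecticBasis b g e' f' ∧ ∀ i, μ (e' i) = 0 := by
  have hq : IsQuadraticRefinement b μ := hμ
  have ⟨_, hff, hef, _⟩ := hbasis
  set a := ∑ i, μ (e i) • f i
  have hea : ∀ l, b (e l) a = μ (e l) := fun l => by simp [a, hef]
  have hμa : μ a = 0 := by
    rw [hq.map_sum_of_pairwise _ _ fun i j _ => by simp [hff]]
    simpa [hq.map_smul] using harf
  let T := LinearEquiv.transvection (f := b.flip a) (halt a)
  refine ⟨T ∘ e, T ∘ f, hbasis.map_linearEquiv T (LinearMap.IsAlt.transvection_flip_apply_apply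
    halt a), fun l => ?_⟩
  change μ (e l + b (e l) a • a) = 0
  rw [hq, hq.map_smul, hμa, map_smul, hea, smul_eq_mul, mul_zero, add_zero]
  exact (by decide : ∀ c : ZMod 2, c + c * c = 0) _

/-- **Lemma 5.5 of the paper (algebraic form).**  Let `V` be a finite-dimensional
`𝔽₂`-vector space with a nondegenerate alternating bilinear form `b` and a quadratic
refinement `μ` of `b`.  If some symplectic basis `{eᵢ, fᵢ}` satisfies
`∑ᵢ μ(eᵢ)μ(fᵢ) = 0` (vanishing Arf invariant), then there is a symplectic basis
`{eᵢ', fᵢ'}` with `μ(eᵢ') = 0` for all `i`. -/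
theorem exists_symplectic_basis_mu_zero
    (V : Type*) [AddCommGroup V] [Module (ZMod 2) V] [FiniteDimensional (ZMod 2) V]
    (b : V →ₗ[ZMod 2] V →ₗ[ZMod 2] ZMod 2)
    (halt : ∀ x, b x x = 0)
    (hnd : Function.Injective fun x => b x)
    (μ : V → ZMod 2)
    (hμ : ∀ x y, μ (x + y) = μ x + μ y + b x y)
    (g : ℕ) (e f : Fin g → V)
    (hbasis : IsSymplecticBasis b g e f)
    (harf : ∑ i, μ (e i) * μ (f i) = 0) :
    ∃ e' f' : Fin g → V, IsSymplecticBasis b g e' f' ∧ ∀ i, μ (e' i) = 0 :=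
  exists_symplectic_basis_mu_zero_general V b halt μ hμ g e f hbasis harf
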